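/- arXiv:1809.07011 — 6 statements merged into one kernel-verified Lean document; each statement's English description precedes it below -/
import Mathlib

section
/- Let π, π' ∈ (0,1), let a, b ≥ 0 with a + b > 0, and set p_u = π·a + (1−π)·b and p_t = π'·a + (1−π')·b. If α = (π − π·π')/(π' + π − 2·π·π'), then sign(π·a/p_u − α) = sign(π'·a/p_t − 1/2). -/
/-!
Both sides have the sign of `π' a - (1 - π') b`: each classifier compares the likelihood ratio
`a / b` with `(1 - π') / π'`. After multiplying by `p_u > 0`, the left side becomes
`π a - α p_u = π (1 - π) / D * (π' a - (1 - π') b)` with `D = π' (1 - π) + π (1 - π') > 0`,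
and the right side `π' a - p_t / 2` is half of `π' a - (1 - π') b`.
-/

namespace Real

theorem sign_mul_of_pos {c : ℝ} (hc : 0 < c) (x : ℝ) : sign (c * x) = sign x := by
  rcases lt_trichotomy x 0 with hx | rfl | hx
  · rw [sign_of_neg hx, sign_of_neg (mul_neg_of_pos_of_neg hc hx)]
  · rw [mul_zero]
  · rw [sign_of_pos hx, sign_of_pos (mul_pos hc hx)]

theorem sign_div_sub {p : ℝ} (hp : 0 < p) (x c : ℝ) : sign (x / p - c) = sign (x - c * p) := by
  rw [← sign_mul_of_pos hp, mul_sub, mul_div_cancel₀ x hp.ne', mul_comm]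

end Real

theorem mixture_pos {t a b : ℝ} (ht : t ∈ Set.Ioo (0 : ℝ) 1) (ha : 0 ≤ a) (hb : 0 ≤ b)
    (hab : 0 < a + b) : 0 < t * a + (1 - t) * b := by
  obtain ⟨ht0, ht1⟩ := ht
  rcases ha.eq_or_lt with rfl | ha
  · rw [zero_add] at hab
    simpa using mul_pos (sub_pos.2 ht1) hab
  · exact add_pos_of_pos_of_nonneg (mul_pos ht0 ha) (mul_nonneg (sub_pos.2 ht1).le hb)

theorem stmt_0 (π π' a b pu pt α : ℝ)
    (hπ : π ∈ Set.Ioo (0:ℝ) 1) (hπ' : π' ∈ Set.Ioo (0:ℝ) 1)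
    (ha : 0 ≤ a) (hb : 0 ≤ b) (hab : 0 < a + b)
    (hpu : pu = π * a + (1 - π) * b) (hpt : pt = π' * a + (1 - π') * b)
    (hα : α = (π - π * π') / (π' + π - 2 * π * π')) :
    Real.sign (π * a / pu - α) = Real.sign (π' * a / pt - 1 / 2) := by
  have hD : 0 < π' + π - 2 * π * π' := by nlinarith [hπ.1, hπ.2, hπ'.1, hπ'.2]
  have hcoef : 0 < π * (1 - π) / (π' + π - 2 * π * π') :=
    div_pos (mul_pos hπ.1 (sub_pos.2 hπ.2)) hD
  have h_train :
      π * a - α * pu = π * (1 - π) / (π' + π - 2 * π * π') * (π' * a - (1 - π') * b) := by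
    rw [hα, hpu, div_mul_eq_mul_div, div_mul_eq_mul_div, sub_div' hD.ne', div_left_inj' hD.ne']
    ring
  have h_test : π' * a - 1 / 2 * pt = 1 / 2 * (π' * a - (1 - π') * b) := by
    rw [hpt]
    ring
  rw [Real.sign_div_sub (hpu ▸ mixture_pos hπ ha hb hab),
    Real.sign_div_sub (hpt ▸ mixture_pos hπ' ha hb hab), h_train, h_test,
    Real.sign_mul_of_pos hcoef, Real.sign_mul_of_pos one_half_pos]
end

section
/- Let π, α ∈ (0,1), let a, b ≥ 0 with a + b > 0, set π' = (π − α·π)/(π + α − 2·α·π), p_u = π·a + (1−π)·b, and p_t = π'·a + (1−π')·b. Then sign(π·a/p_u − α) = sign(π'·a/p_t − 1/2). -/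
/-!
Put `E = π(1-α)a - α(1-π)b`. Clearing the positive denominator `p_u` gives
`π a / p_u - α = E / p_u`. The shifted prior satisfies `π' / (1 - π') = π(1-α) / (α(1-π))`,
so likewise `π' a / p_t - 1/2 = (π' a - (1-π') b) / (2 p_t)` with
`π' a - (1-π') b = E / (π + α - 2απ)`. All denominators are positive, so both sides are `sign E`.
-/

open Set

namespace PUPriorShift

lemma sign_div_of_pos (x : ℝ) {y : ℝ} (hy : 0 < y) : Real.sign (x / y) = Real.sign x := by
  rcases lt_trichotomy x 0 with hx | rfl | hx
  · rw [Real.sign_of_neg hx, Real.sign_of_neg (div_neg_of_neg_of_pos hx hy)]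
  · rw [zero_div]
  · rw [Real.sign_of_pos hx, Real.sign_of_pos (div_pos hx hy)]

lemma mixture_pos {π a b : ℝ} (hπ : π ∈ Ioo (0 : ℝ) 1) (ha : 0 ≤ a) (hb : 0 ≤ b)
    (hab : 0 < a + b) : 0 < π * a + (1 - π) * b := by
  obtain ⟨hπ0, hπ1⟩ := hπ
  rcases ha.lt_or_eq with ha | rfl
  · nlinarith
  · nlinarith

lemma posterior_sub_eq {π a b : ℝ} (c : ℝ) (hp : π * a + (1 - π) * b ≠ 0) :
    π * a / (π * a + (1 - π) * b) - c
      = (π * (1 - c) * a - c * (1 - π) * b) / (π * a + (1 - π) * b) := by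
  field_simp
  ring

lemma sign_posterior_sub {π a b : ℝ} (c : ℝ) (hπ : π ∈ Ioo (0 : ℝ) 1) (ha : 0 ≤ a)
    (hb : 0 ≤ b) (hab : 0 < a + b) :
    Real.sign (π * a / (π * a + (1 - π) * b) - c)
      = Real.sign (π * (1 - c) * a - c * (1 - π) * b) := by
  have hp := mixture_pos hπ ha hb hab
  rw [posterior_sub_eq c hp.ne', sign_div_of_pos _ hp]

section ShiftedPrior

variable {π α : ℝ} (hπ : π ∈ Ioo (0 : ℝ) 1) (hα : α ∈ Ioo (0 : ℝ) 1)
include hπ hα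

lemma shifted_prior_denom_pos : 0 < π + α - 2 * α * π := by
  obtain ⟨hπ0, hπ1⟩ := hπ
  obtain ⟨hα0, hα1⟩ := hα
  nlinarith

lemma shifted_prior_mem_Ioo :
    (π - α * π) / (π + α - 2 * α * π) ∈ Ioo (0 : ℝ) 1 := by
  have hD := shifted_prior_denom_pos hπ hα
  obtain ⟨hπ0, hπ1⟩ := hπ
  obtain ⟨hα0, hα1⟩ := hα
  constructor
  · exact div_pos (by nlinarith) hD
  · rw [div_lt_one hD]
    nlinarith

lemma one_sub_shifted_prior :
    1 - (π - α * π) / (π + α - 2 * α * π) = α * (1 - π) / (π + α - 2 * α * π) := by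
  rw [eq_div_iff (shifted_prior_denom_pos hπ hα).ne', sub_mul,
    div_mul_cancel₀ _ (shifted_prior_denom_pos hπ hα).ne']
  ring

lemma shifted_prior_balanced_score (a b : ℝ) :
    (π - α * π) / (π + α - 2 * α * π) * (1 - 1 / 2) * a
        - 1 / 2 * (1 - (π - α * π) / (π + α - 2 * α * π)) * b
      = (π * (1 - α) * a - α * (1 - π) * b) / (π + α - 2 * α * π) / 2 := by
  rw [one_sub_shifted_prior hπ hα]
  ring

end ShiftedPrior

end PUPriorShift

open PUPriorShift in
theorem stmt_1 (π α a b π' pu pt : ℝ)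
    (hπ : π ∈ Set.Ioo (0:ℝ) 1) (hα : α ∈ Set.Ioo (0:ℝ) 1)
    (ha : 0 ≤ a) (hb : 0 ≤ b) (hab : 0 < a + b)
    (hπ' : π' = (π - α * π) / (π + α - 2 * α * π))
    (hpu : pu = π * a + (1 - π) * b) (hpt : pt = π' * a + (1 - π') * b) :
    Real.sign (π * a / pu - α) = Real.sign (π' * a / pt - 1 / 2) := by
  have hπ'_mem : π' ∈ Ioo (0 : ℝ) 1 := hπ' ▸ shifted_prior_mem_Ioo hπ hα
  rw [hpu, hpt, sign_posterior_sub α hπ ha hb hab, sign_posterior_sub (1 / 2) hπ'_mem ha hb hab,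
    hπ', shifted_prior_balanced_score hπ hα,
    sign_div_of_pos _ two_pos, sign_div_of_pos _ (shifted_prior_denom_pos hπ hα)]
end

section
/- Let μ_p and μ_n be probability measures on a measurable space X, let π, π' ∈ (0,1), and let μ_u = π·μ_p + (1−π)·μ_n. Let g : X → ℝ and ℓ : ℝ → ℝ be such that x ↦ ℓ(g x) and x ↦ ℓ(−g x) are integrable with respect to both μ_p and μ_n. Then π'·∫ ℓ(g x) dμ_p + (1−π')·∫ ℓ(−g x) dμ_n = ∫ (π'·ℓ(g x) − ((π − π·π')/(1−π))·ℓ(−g x)) dμ_p + ((1−π')/(1−π))·∫ ℓ(−g x) dμ_u. -/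
open MeasureTheory

theorem integral_ofReal_smul_add_ofReal_smul_measure {X : Type*} [MeasurableSpace X]
    {μ ν : Measure X} {a b : ℝ} (ha : 0 ≤ a) (hb : 0 ≤ b) {f : X → ℝ}
    (hμ : Integrable f μ) (hν : Integrable f ν) :
    ∫ x, f x ∂(ENNReal.ofReal a • μ + ENNReal.ofReal b • ν)
      = a * ∫ x, f x ∂μ + b * ∫ x, f x ∂ν := by
  rw [integral_add_measure (hμ.smul_measure ENNReal.ofReal_ne_top)
    (hν.smul_measure ENNReal.ofReal_ne_top), integral_smul_measure, integral_smul_measure,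
    ENNReal.toReal_ofReal ha, ENNReal.toReal_ofReal hb, smul_eq_mul, smul_eq_mul]

theorem stmt_4_general {X : Type*} [MeasurableSpace X]
    (μp μn : Measure X)
    (π π' : ℝ) (hπ : π ∈ Set.Ioo (0:ℝ) 1)
    (μu : Measure X) (hμu : μu = ENNReal.ofReal π • μp + ENNReal.ofReal (1 - π) • μn)
    (g : X → ℝ) (ℓ : ℝ → ℝ)
    (h1p : Integrable (fun x => ℓ (g x)) μp)
    (h2p : Integrable (fun x => ℓ (-g x)) μp) (h2n : Integrable (fun x => ℓ (-g x)) μn) :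
    π' * ∫ x, ℓ (g x) ∂μp + (1 - π') * ∫ x, ℓ (-g x) ∂μn
      = ∫ x, (π' * ℓ (g x) - (π - π * π') / (1 - π) * ℓ (-g x)) ∂μp
        + (1 - π') / (1 - π) * ∫ x, ℓ (-g x) ∂μu := by
  obtain ⟨hπ0, hπ1⟩ := hπ
  have hu : ∫ x, ℓ (-g x) ∂μu
      = π * ∫ x, ℓ (-g x) ∂μp + (1 - π) * ∫ x, ℓ (-g x) ∂μn :=
    hμu ▸ integral_ofReal_smul_add_ofReal_smul_measure hπ0.le (sub_nonneg.2 hπ1.le) h2p h2n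
  have hp : ∫ x, (π' * ℓ (g x) - (π - π * π') / (1 - π) * ℓ (-g x)) ∂μp
      = π' * ∫ x, ℓ (g x) ∂μp - (π - π * π') / (1 - π) * ∫ x, ℓ (-g x) ∂μp := by
    rw [integral_sub (h1p.const_mul _) (h2p.const_mul _), integral_const_mul, integral_const_mul]
  rw [hu, hp]
  field_simp [sub_ne_zero.2 hπ1.ne']
  ring

theorem stmt_4 {X : Type*} [MeasurableSpace X]
    (μp μn : Measure X) [IsProbabilityMeasure μp] [IsProbabilityMeasure μn]
    (π π' : ℝ) (hπ : π ∈ Set.Ioo (0:ℝ) 1) (hπ' : π' ∈ Set.Ioo (0:ℝ) 1)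
    (μu : Measure X) (hμu : μu = ENNReal.ofReal π • μp + ENNReal.ofReal (1 - π) • μn)
    (g : X → ℝ) (ℓ : ℝ → ℝ)
    (h1p : Integrable (fun x => ℓ (g x)) μp) (h1n : Integrable (fun x => ℓ (g x)) μn)
    (h2p : Integrable (fun x => ℓ (-g x)) μp) (h2n : Integrable (fun x => ℓ (-g x)) μn) :
    π' * ∫ x, ℓ (g x) ∂μp + (1 - π') * ∫ x, ℓ (-g x) ∂μn
      = ∫ x, (π' * ℓ (g x) - (π - π * π') / (1 - π) * ℓ (-g x)) ∂μp
        + (1 - π') / (1 - π) * ∫ x, ℓ (-g x) ∂μu :=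
  stmt_4_general μp μn π π' hπ μu hμu g ℓ h1p h2p h2n
end

section
/- Let E be a real inner product space, X a measurable space, φ : X → E, and for θ ∈ E define g_θ(x) = ⟪θ, φ x⟫. Let ℓ : ℝ → ℝ be convex with ℓ(z) − ℓ(−z) = −z for all z ∈ ℝ. Let μ_p be a probability measure and μ_u a finite measure on X such that for every θ ∈ E the maps x ↦ ℓ(g_θ x), x ↦ ℓ(−g_θ x), and x ↦ ⟪θ, φ x⟫ are integrable with respect to μ_p and μ_u. If π, π' ∈ (0,1) with π ≤ π', then the function θ ↦ ∫ (π'·ℓ(g_θ x) − ((π − π·π')/(1−π))·ℓ(−g_θ x)) dμ_p + ((1−π')/(1−π))·∫ ℓ(−g_θ x) dμ_u is convex on E. -/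
/-!
Since `ℓ (-z) = ℓ z + z`, the integrand against `μp` is `(π' - c) * ℓ (g_θ x) - c * g_θ x`
with `c = π (1 - π') / (1 - π)`, and `c ≤ π'` is exactly `π ≤ π'`. So for each `x` the
integrand is convex in `θ`, hence so is its integral; the `μu` term is a nonnegative multiple
of an integral of the convex functions `θ ↦ ℓ (-g_θ x)`.
-/

open MeasureTheory Set

theorem ConvexOn.comp_inner_left {E : Type*} [NormedAddCommGroup E] [InnerProductSpace ℝ E]
    {f : ℝ → ℝ} (hf : ConvexOn ℝ univ f) (v : E) :
    ConvexOn ℝ univ (fun θ : E => f (inner ℝ θ v)) :=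
  hf.comp_linearMap ((innerₗ E).flip v)

theorem ConvexOn.mul_sub_mul_comp_neg {ℓ : ℝ → ℝ} (hℓ : ConvexOn ℝ univ ℓ)
    (hℓodd : ∀ z, ℓ z - ℓ (-z) = -z) {a c : ℝ} (hca : c ≤ a) :
    ConvexOn ℝ univ (fun z => a * ℓ z - c * ℓ (-z)) := by
  have hlin : ConvexOn ℝ univ (fun z : ℝ => -c * z) :=
    ((-c) • LinearMap.id : ℝ →ₗ[ℝ] ℝ).convexOn convex_univ
  have hsplit : (fun z => a * ℓ z - c * ℓ (-z)) = fun z => (a - c) • ℓ z + -c * z := by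
    funext z
    rw [smul_eq_mul]
    linear_combination c * hℓodd z
  rw [hsplit]
  exact (hℓ.smul (sub_nonneg.2 hca)).add hlin

theorem stmt_5_general {E : Type*} [NormedAddCommGroup E] [InnerProductSpace ℝ E]
    {X : Type*} [MeasurableSpace X] (φ : X → E)
    (ℓ : ℝ → ℝ) (hℓconv : ConvexOn ℝ Set.univ ℓ)
    (hℓodd : ∀ z : ℝ, ℓ z - ℓ (-z) = -z)
    (μp μu : Measure X)
    (hint1p : ∀ θ : E, Integrable (fun x => ℓ (inner ℝ θ (φ x) : ℝ)) μp)
    (hint2p : ∀ θ : E, Integrable (fun x => ℓ (-(inner ℝ θ (φ x) : ℝ))) μp)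
    (hint2u : ∀ θ : E, Integrable (fun x => ℓ (-(inner ℝ θ (φ x) : ℝ))) μu)
    (π π' : ℝ) (hπ : π ∈ Set.Ioo (0:ℝ) 1) (hπ' : π' ∈ Set.Ioo (0:ℝ) 1)
    (hππ' : π ≤ π') :
    ConvexOn ℝ Set.univ (fun θ : E =>
      (∫ x, (π' * ℓ (inner ℝ θ (φ x) : ℝ)
          - (π - π * π') / (1 - π) * ℓ (-(inner ℝ θ (φ x) : ℝ))) ∂μp)
        + (1 - π') / (1 - π) * ∫ x, ℓ (-(inner ℝ θ (φ x) : ℝ)) ∂μu) := by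
  have h1π : 0 < 1 - π := sub_pos.2 hπ.2
  have hcoef : (π - π * π') / (1 - π) ≤ π' := by
    rw [div_le_iff₀ h1π]
    linarith
  have hpos : ConvexOn ℝ univ fun θ : E => ∫ x, (π' * ℓ (inner ℝ θ (φ x))
      - (π - π * π') / (1 - π) * ℓ (-inner ℝ θ (φ x))) ∂μp :=
    integral_convexOn_of_integrand_ae convex_univ
      (ae_of_all _ fun x => (hℓconv.mul_sub_mul_comp_neg hℓodd hcoef).comp_inner_left (φ x))
      fun θ _ => ((hint1p θ).const_mul _).sub ((hint2p θ).const_mul _)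
  have hunl : ConvexOn ℝ univ fun θ : E => ∫ x, ℓ (-inner ℝ θ (φ x)) ∂μu :=
    integral_convexOn_of_integrand_ae convex_univ
      (ae_of_all _ fun x => by simpa only [inner_neg_right] using hℓconv.comp_inner_left (-φ x))
      fun θ _ => hint2u θ
  exact hpos.add (hunl.smul (div_nonneg (sub_nonneg.2 hπ'.2.le) h1π.le))

theorem stmt_5 {E : Type*} [NormedAddCommGroup E] [InnerProductSpace ℝ E]
    {X : Type*} [MeasurableSpace X] (φ : X → E)
    (ℓ : ℝ → ℝ) (hℓconv : ConvexOn ℝ Set.univ ℓ)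
    (hℓodd : ∀ z : ℝ, ℓ z - ℓ (-z) = -z)
    (μp μu : Measure X) [IsProbabilityMeasure μp] [IsFiniteMeasure μu]
    (hint1p : ∀ θ : E, Integrable (fun x => ℓ (inner ℝ θ (φ x) : ℝ)) μp)
    (hint1u : ∀ θ : E, Integrable (fun x => ℓ (inner ℝ θ (φ x) : ℝ)) μu)
    (hint2p : ∀ θ : E, Integrable (fun x => ℓ (-(inner ℝ θ (φ x) : ℝ))) μp)
    (hint2u : ∀ θ : E, Integrable (fun x => ℓ (-(inner ℝ θ (φ x) : ℝ))) μu)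
    (hint3p : ∀ θ : E, Integrable (fun x => (inner ℝ θ (φ x) : ℝ)) μp)
    (hint3u : ∀ θ : E, Integrable (fun x => (inner ℝ θ (φ x) : ℝ)) μu)
    (π π' : ℝ) (hπ : π ∈ Set.Ioo (0:ℝ) 1) (hπ' : π' ∈ Set.Ioo (0:ℝ) 1)
    (hππ' : π ≤ π') :
    ConvexOn ℝ Set.univ (fun θ : E =>
      (∫ x, (π' * ℓ (inner ℝ θ (φ x) : ℝ)
          - (π - π * π') / (1 - π) * ℓ (-(inner ℝ θ (φ x) : ℝ))) ∂μp)
        + (1 - π') / (1 - π) * ∫ x, ℓ (-(inner ℝ θ (φ x) : ℝ)) ∂μu) :=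
  stmt_5_general φ ℓ hℓconv hℓodd μp μu hint1p hint2p hint2u π π' hπ hπ' hππ'
end

section
/- Let π, α ∈ (0,1). Then π + α − 2·α·π > 0, the quantity π' = (π − α·π)/(π + α − 2·α·π) satisfies 0 < π' < 1, and moreover (π − π·π')/(π' + π − 2·π·π') = α. -/
/-!
Write `D = π + α - 2απ = π(1 - α) + α(1 - π)`, a sum of two positive terms. Then
`π' = π(1 - α) / D` is one of those terms divided by their sum, hence lies in `(0, 1)`.
Substituting, `π - ππ' = απ(1 - π) / D` and `π' + π - 2ππ' = π(1 - π) / D`, whose ratio is `α`.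
-/

open Set

/-- The false positive penalty of Theorem 1 attached to training prior `π` and test prior `π'`. -/
noncomputable def penaltyOfPriors (π π' : ℝ) : ℝ := (π - π * π') / (π' + π - 2 * π * π')

/-- The equivalent test prior of Corollary 1 attached to training prior `π` and penalty `α`. -/
noncomputable def priorOfPenalty (π α : ℝ) : ℝ := (π - α * π) / (π + α - 2 * α * π)

lemma priorOfPenalty_denom_pos {π α : ℝ} (hπ : π ∈ Ioo (0 : ℝ) 1) (hα : α ∈ Ioo (0 : ℝ) 1) :
    0 < π + α - 2 * α * π := by
  have hsplit : π + α - 2 * α * π = π * (1 - α) + α * (1 - π) := by ring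
  rw [hsplit]
  exact add_pos (mul_pos hπ.1 (sub_pos.2 hα.2)) (mul_pos hα.1 (sub_pos.2 hπ.2))

lemma priorOfPenalty_mem_Ioo {π α : ℝ} (hπ : π ∈ Ioo (0 : ℝ) 1) (hα : α ∈ Ioo (0 : ℝ) 1) :
    priorOfPenalty π α ∈ Ioo (0 : ℝ) 1 := by
  have hD := priorOfPenalty_denom_pos hπ hα
  have hnum : 0 < π * (1 - α) := mul_pos hπ.1 (sub_pos.2 hα.2)
  have hgap : 0 < α * (1 - π) := mul_pos hα.1 (sub_pos.2 hπ.2)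
  exact ⟨div_pos (by linarith) hD, (div_lt_one hD).2 (by linarith)⟩

lemma penaltyOfPriors_priorOfPenalty {π α : ℝ} (hπ₀ : π ≠ 0) (hπ₁ : π ≠ 1)
    (hD : π + α - 2 * α * π ≠ 0) : penaltyOfPriors π (priorOfPenalty π α) = α := by
  have hπ₁' : 1 - π ≠ 0 := sub_ne_zero.2 (Ne.symm hπ₁)
  have hprior : priorOfPenalty π α * (π + α - 2 * α * π) = π - α * π :=
    div_mul_cancel₀ _ hD
  have hnum : π - π * priorOfPenalty π α = α * (π * (1 - π)) / (π + α - 2 * α * π) := by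
    rw [eq_div_iff hD]; linear_combination (-π) * hprior
  have hden : priorOfPenalty π α + π - 2 * π * priorOfPenalty π α
      = π * (1 - π) / (π + α - 2 * α * π) := by
    rw [eq_div_iff hD]; linear_combination (1 - 2 * π) * hprior
  rw [penaltyOfPriors, hnum, hden, div_div_div_cancel_right₀ hD,
    mul_div_cancel_right₀ _ (mul_ne_zero hπ₀ hπ₁')]

theorem stmt_12 (π α : ℝ) (hπ : π ∈ Set.Ioo (0:ℝ) 1) (hα : α ∈ Set.Ioo (0:ℝ) 1) :
    0 < π + α - 2 * α * π ∧
      (0 < (π - α * π) / (π + α - 2 * α * π) ∧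
        (π - α * π) / (π + α - 2 * α * π) < 1) ∧
      (π - π * ((π - α * π) / (π + α - 2 * α * π))) /
          ((π - α * π) / (π + α - 2 * α * π) + π
            - 2 * π * ((π - α * π) / (π + α - 2 * α * π))) = α := by
  have hD := priorOfPenalty_denom_pos hπ hα
  exact ⟨hD, priorOfPenalty_mem_Ioo hπ hα,
    penaltyOfPriors_priorOfPenalty hπ.1.ne' hπ.2.ne hD.ne'⟩
end

section
/- Let μ_p be a probability measure and μ_u a finite measure on a measurable space X, let π, π' ∈ (0,1), and set γ = π' − π. Let g : X → ℝ and ℓ : ℝ → ℝ satisfy ℓ(z) − ℓ(−z) = −z for all z ∈ ℝ, and assume x ↦ ℓ(g x), x ↦ ℓ(−g x), and x ↦ g x are integrable with respect to μ_p, and x ↦ ℓ(−g x) is integrable with respect to μ_u. Then ∫ (π'·ℓ(g x) − ((π − π·π')/(1−π))·ℓ(−g x)) dμ_p + ((1−π')/(1−π))·∫ ℓ(−g x) dμ_u = −π·∫ g x dμ_p + γ·∫ (ℓ(g x) + (π/(1−π))·ℓ(−g x)) dμ_p + (1 − γ/(1−π))·∫ ℓ(−g x) dμ_u. -/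
open MeasureTheory

section LinearOdd

variable {X : Type*} {ℓ : ℝ → ℝ} {g : X → ℝ}

theorem comp_eq_comp_neg_sub_of_linearOdd (hℓ : ∀ z : ℝ, ℓ z - ℓ (-z) = -z) :
    (fun x => ℓ (g x)) = fun x => ℓ (-g x) - g x := by
  funext x
  linarith [hℓ (g x)]

variable [MeasurableSpace X] {μ : Measure X}

theorem integrable_comp_of_linearOdd (hℓ : ∀ z : ℝ, ℓ z - ℓ (-z) = -z)
    (hℓg : Integrable (fun x => ℓ (-g x)) μ) (hg : Integrable g μ) :
    Integrable (fun x => ℓ (g x)) μ := by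
  rw [comp_eq_comp_neg_sub_of_linearOdd hℓ]
  exact hℓg.sub hg

theorem integral_comp_of_linearOdd (hℓ : ∀ z : ℝ, ℓ z - ℓ (-z) = -z)
    (hℓg : Integrable (fun x => ℓ (-g x)) μ) (hg : Integrable g μ) :
    ∫ x, ℓ (g x) ∂μ = ∫ x, ℓ (-g x) ∂μ - ∫ x, g x ∂μ := by
  rw [comp_eq_comp_neg_sub_of_linearOdd hℓ]
  exact integral_sub hℓg hg

end LinearOdd

theorem stmt_14_general {X : Type*} [MeasurableSpace X]
    (μp μu : Measure X)
    (π π' γ : ℝ) (hπ : π ∈ Set.Ioo (0:ℝ) 1)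
    (hγ : γ = π' - π)
    (g : X → ℝ) (ℓ : ℝ → ℝ) (hℓodd : ∀ z : ℝ, ℓ z - ℓ (-z) = -z)
    (h2p : Integrable (fun x => ℓ (-g x)) μp)
    (h3p : Integrable (fun x => g x) μp) :
    (∫ x, (π' * ℓ (g x) - (π - π * π') / (1 - π) * ℓ (-g x)) ∂μp)
        + (1 - π') / (1 - π) * ∫ x, ℓ (-g x) ∂μu
      = -π * (∫ x, g x ∂μp)
        + γ * (∫ x, (ℓ (g x) + π / (1 - π) * ℓ (-g x)) ∂μp)
        + (1 - γ / (1 - π)) * ∫ x, ℓ (-g x) ∂μu := by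
  have hπ1 : (1:ℝ) - π ≠ 0 := by linarith [hπ.2]
  have h1p := integrable_comp_of_linearOdd hℓodd h2p h3p
  rw [integral_sub (h1p.const_mul _) (h2p.const_mul _), integral_add h1p (h2p.const_mul _),
    integral_const_mul, integral_const_mul, integral_const_mul,
    integral_comp_of_linearOdd hℓodd h2p h3p]
  subst hγ
  field_simp
  ring

theorem stmt_14 {X : Type*} [MeasurableSpace X]
    (μp μu : Measure X) [IsProbabilityMeasure μp] [IsFiniteMeasure μu]
    (π π' γ : ℝ) (hπ : π ∈ Set.Ioo (0:ℝ) 1) (hπ' : π' ∈ Set.Ioo (0:ℝ) 1)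
    (hγ : γ = π' - π)
    (g : X → ℝ) (ℓ : ℝ → ℝ) (hℓodd : ∀ z : ℝ, ℓ z - ℓ (-z) = -z)
    (h1p : Integrable (fun x => ℓ (g x)) μp)
    (h2p : Integrable (fun x => ℓ (-g x)) μp)
    (h3p : Integrable (fun x => g x) μp)
    (h2u : Integrable (fun x => ℓ (-g x)) μu) :
    (∫ x, (π' * ℓ (g x) - (π - π * π') / (1 - π) * ℓ (-g x)) ∂μp)
        + (1 - π') / (1 - π) * ∫ x, ℓ (-g x) ∂μu
      = -π * (∫ x, g x ∂μp)
        + γ * (∫ x, (ℓ (g x) + π / (1 - π) * ℓ (-g x)) ∂μp)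
        + (1 - γ / (1 - π)) * ∫ x, ℓ (-g x) ∂μu :=
  stmt_14_general μp μu π π' γ hπ hγ g ℓ hℓodd h2p h3p
end
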